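/- For every real η ∈ (0,1) and every t with −1 ≤ t, the inequality (1+t)^{1+η} ≤ 1 + (1+η)t + |t|^{1+η} holds. -/

import Mathlib

/-!
Write `p = 1 + η ∈ [1, 2]`; both sides agree at `t = 0`, so it suffices to compare derivatives on
either side of `0`. For `t ≥ 0` the derivative of the difference is
`p (1 + t^(p-1) - (1+t)^(p-1)) ≥ 0` by subadditivity of `x ↦ x^(p-1)`. For `t = -s ∈ [-1, 0]`,
with the difference written as a function of `s`, it is `p (s^(p-1) + (1-s)^(p-1) - 1) ≥ 0`,
because `x^(p-1) ≥ x` on `[0, 1]`.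
-/

open Real Set

theorem one_add_rpow_le_of_nonneg {p t : ℝ} (hp : 1 ≤ p) (hp2 : p ≤ 2) (ht : 0 ≤ t) :
    (1 + t) ^ p ≤ 1 + p * t + t ^ p := by
  set f : ℝ → ℝ := fun x => 1 + p * x + x ^ p - (1 + x) ^ p
  have hf : ∀ x, HasDerivAt f (p + p * x ^ (p - 1) - p * (1 + x) ^ (p - 1)) x := by
    intro x
    refine (((((hasDerivAt_id x).const_mul p).const_add 1).add
      ((hasDerivAt_id x).rpow_const (Or.inr hp))).sub
      (((hasDerivAt_id x).const_add 1).rpow_const (Or.inr hp))).congr_deriv ?_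
    simp only [id, mul_one, one_mul]
  have hmono : MonotoneOn f (Ici 0) := by
    refine monotoneOn_of_hasDerivWithinAt_nonneg (convex_Ici 0)
      (fun x _ => (hf x).continuousAt.continuousWithinAt) (fun x _ => (hf x).hasDerivWithinAt)
      fun x hx => ?_
    rw [interior_Ici] at hx
    have hsub := rpow_add_le_add_rpow zero_le_one hx.le (by linarith) (by linarith : p - 1 ≤ 1)
    rw [one_rpow] at hsub
    nlinarith
  have h := hmono self_mem_Ici ht ht
  simp only [f, mul_zero, add_zero, zero_rpow (by linarith : p ≠ 0), one_rpow] at h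
  linarith

theorem one_sub_rpow_le {p s : ℝ} (hp : 1 ≤ p) (hp2 : p ≤ 2) (hs0 : 0 ≤ s) (hs1 : s ≤ 1) :
    (1 - s) ^ p ≤ 1 - p * s + s ^ p := by
  set g : ℝ → ℝ := fun x => 1 - p * x + x ^ p - (1 - x) ^ p
  have hg : ∀ x, HasDerivAt g (-p + p * x ^ (p - 1) + p * (1 - x) ^ (p - 1)) x := by
    intro x
    refine (((((hasDerivAt_id x).const_mul p).const_sub 1).add
      ((hasDerivAt_id x).rpow_const (Or.inr hp))).sub
      (((hasDerivAt_id x).const_sub 1).rpow_const (Or.inr hp))).congr_deriv ?_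
    simp only [id, mul_one, one_mul]
    ring
  have hmono : MonotoneOn g (Icc 0 1) := by
    refine monotoneOn_of_hasDerivWithinAt_nonneg (convex_Icc 0 1)
      (fun x _ => (hg x).continuousAt.continuousWithinAt) (fun x _ => (hg x).hasDerivWithinAt)
      fun x hx => ?_
    rw [interior_Icc] at hx
    obtain ⟨hx0, hx1⟩ := hx
    have hp1 : p - 1 ≤ 1 := by linarith
    have h₁ := self_le_rpow_of_le_one hx0.le hx1.le hp1
    have h₂ := self_le_rpow_of_le_one (by linarith : 0 ≤ 1 - x) (by linarith) hp1
    nlinarith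
  have h := hmono (left_mem_Icc.mpr zero_le_one) ⟨hs0, hs1⟩ hs0
  simp only [g, mul_zero, sub_zero, add_zero, zero_rpow (by linarith : p ≠ 0), one_rpow] at h
  linarith

theorem stmt2 : ∀ η ∈ Set.Ioo (0:ℝ) 1, ∀ t : ℝ, -1 ≤ t →
    (1 + t) ^ (1 + η) ≤ 1 + (1 + η) * t + |t| ^ (1 + η) := by
  rintro η ⟨hη0, hη1⟩ t ht
  rcases le_or_gt 0 t with h | h
  · rw [abs_of_nonneg h]
    exact one_add_rpow_le_of_nonneg (by linarith) (by linarith) h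
  · rw [abs_of_neg h]
    have h' := one_sub_rpow_le (p := 1 + η) (s := -t) (by linarith) (by linarith) (by linarith)
      (by linarith)
    rw [sub_neg_eq_add] at h'
    linarith
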